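/- Let p ∈ ℝ² with ‖p‖ > r > 0 and let v ∈ ℝ² be nonzero with h(p,v) := ⟨p, v⟩ + ‖v‖·√(‖p‖² − r²) > 0. Then the ray t ↦ p + t·v, t ≥ 0, never enters the open disk of radius r centered at the origin; that is, ‖p + t v‖ ≥ r for all t ≥ 0. -/

import Mathlib

open scoped RealInnerProductSpace

/-!
With `s = √(‖p‖² - r²)`, the cone condition says `⟪p, v⟫ ≥ -‖v‖ s`, so for `t ≥ 0`
`‖p + t v‖² - r² = s² + 2 t ⟪p, v⟫ + t² ‖v‖² ≥ (s - t ‖v‖)² ≥ 0`.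
-/

section

variable {E : Type*} [NormedAddCommGroup E] [InnerProductSpace ℝ E]

theorem norm_add_smul_sq_real (p v : E) (t : ℝ) :
    ‖p + t • v‖ ^ 2 = ‖p‖ ^ 2 + 2 * t * ⟪p, v⟫ + t ^ 2 * ‖v‖ ^ 2 := by
  rw [norm_add_sq_real, real_inner_smul_right, norm_smul, mul_pow, Real.norm_eq_abs, sq_abs]
  ring

theorem sq_le_norm_add_smul_sq_of_cone {p v : E} {r t : ℝ} (hrp : r ^ 2 ≤ ‖p‖ ^ 2)
    (hcone : 0 ≤ ⟪p, v⟫ + ‖v‖ * Real.sqrt (‖p‖ ^ 2 - r ^ 2)) (ht : 0 ≤ t) :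
    r ^ 2 ≤ ‖p + t • v‖ ^ 2 := by
  set s := Real.sqrt (‖p‖ ^ 2 - r ^ 2)
  have hs : s ^ 2 = ‖p‖ ^ 2 - r ^ 2 := Real.sq_sqrt (sub_nonneg.mpr hrp)
  have hinner : -(‖v‖ * s) ≤ ⟪p, v⟫ := neg_le_iff_add_nonneg.mpr (by linarith)
  calc r ^ 2 ≤ r ^ 2 + (s - t * ‖v‖) ^ 2 := le_add_of_nonneg_right (sq_nonneg _)
    _ = ‖p‖ ^ 2 + 2 * t * -(‖v‖ * s) + t ^ 2 * ‖v‖ ^ 2 := by linear_combination hs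
    _ ≤ ‖p‖ ^ 2 + 2 * t * ⟪p, v⟫ + t ^ 2 * ‖v‖ ^ 2 := by gcongr
    _ = ‖p + t • v‖ ^ 2 := (norm_add_smul_sq_real p v t).symm

theorem le_norm_add_smul_of_cone {p v : E} {r t : ℝ} (hr : 0 ≤ r) (hrp : r ≤ ‖p‖)
    (hcone : 0 ≤ ⟪p, v⟫ + ‖v‖ * Real.sqrt (‖p‖ ^ 2 - r ^ 2)) (ht : 0 ≤ t) :
    r ≤ ‖p + t • v‖ :=
  (pow_le_pow_iff_left₀ hr (norm_nonneg _) two_ne_zero).mp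
    (sq_le_norm_add_smul_sq_of_cone (pow_le_pow_left₀ hr hrp 2) hcone ht)

end

theorem stmt_1_general (p v : EuclideanSpace ℝ (Fin 2)) (r : ℝ) (hr : 0 < r)
    (hpr : r < ‖p‖)
    (hcone : ⟪p, v⟫ + ‖v‖ * Real.sqrt (‖p‖ ^ 2 - r ^ 2) > 0) :
    ∀ t : ℝ, 0 ≤ t → r ≤ ‖p + t • v‖ :=
  fun _ ht => le_norm_add_smul_of_cone hr.le hpr.le hcone.le ht

/-- If the relative velocity lies outside the collision cone (h > 0), the ray
never enters the open disk of radius r. -/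
theorem stmt_1 (p v : EuclideanSpace ℝ (Fin 2)) (r : ℝ) (hr : 0 < r)
    (hpr : r < ‖p‖) (hv : v ≠ 0)
    (hcone : ⟪p, v⟫ + ‖v‖ * Real.sqrt (‖p‖ ^ 2 - r ^ 2) > 0) :
    ∀ t : ℝ, 0 ≤ t → r ≤ ‖p + t • v‖ :=
  stmt_1_general p v r hr hpr hcone
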